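/- arXiv:2401.13774 — 3 statements merged into one kernel-verified Lean document; each statement's English description precedes it below -/
import Mathlib

section
/- For all h, h' in H and for both sign choices, the right-module edge operators satisfy L̃^h_± ∘ L̃^{h'}_± = L̃^{h'h}_± and L̃^1_± = id; that is, the families L̃_+ and L̃_- each make H* into a right H-module. -/
/-!
Common setup for formalizing "Ribbon operators in the semidual lattice code model"
(Soglohu–Osei–Osumanu).

`H` is a Hopf algebra over `ℂ`.  Its dual Hopf algebra `H*` is realised as
`Module.Dual ℂ H`, with evaluation pairing `⟨h, φ⟩ = φ h`.  The multiplication of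
`H*` is dual to the comultiplication of `H` and the comultiplication of `H*` is
dual to the multiplication of `H`; consequently every edge operator below, given
in the paper by a Sweedler formula on `H*`, is pre-composition
(`LinearMap.dualMap`) with an explicit linear endomorphism of `H`.  For instance
`L^h₊(φ) = ⟨h, S(φ₍₁₎) φ₍₃₎⟩ φ₍₂₎` is exactly `(L^h₊ φ)(x) = Σ φ (S h₍₁₎ * x * h₍₂₎)`.
Since the antipode is assumed involutive (`S⁻¹ = S`), occurrences of `S⁻¹` are
rendered as `S`.
-/

open TensorProduct

noncomputable section

namespace SemidualKitaev

variable {H : Type} [Ring H] [HopfAlgebra ℂ H]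

/-- The antipode of `H`. -/
abbrev S : H →ₗ[ℂ] H := HopfAlgebra.antipode (R := ℂ)

/-- The comultiplication of `H`. -/
abbrev Δ : H →ₗ[ℂ] H ⊗[ℂ] H := Coalgebra.comul (R := ℂ)

/-- The counit of `H`. -/
abbrev ε : H →ₗ[ℂ] ℂ := Coalgebra.counit (R := ℂ)

/-- `sandwich (u ⊗ v) : x ↦ u * x * v`. -/
def sandwich : H ⊗[ℂ] H →ₗ[ℂ] H →ₗ[ℂ] H :=
  TensorProduct.lift <| LinearMap.mk₂ ℂ
    (fun u v => (LinearMap.mulRight ℂ v) ∘ₗ (LinearMap.mulLeft ℂ u))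
    (fun u u' v => LinearMap.ext fun x => by simp [add_mul])
    (fun c u v => LinearMap.ext fun x => by simp [smul_mul_assoc])
    (fun u v v' => LinearMap.ext fun x => by simp [mul_add])
    (fun c u v => LinearMap.ext fun x => by simp [mul_smul_comm])

@[simp] lemma sandwich_tmul (u v x : H) : sandwich (u ⊗ₜ[ℂ] v) x = u * x * v := rfl

/-! ### Edge (triangle) operators on `H* = Module.Dual ℂ H`

Left-module versions (eq. (3.3) of the paper). -/

/-- `L^h₊(φ) = ⟨h, S(φ₍₁₎) φ₍₃₎⟩ φ₍₂₎`, i.e. `(L^h₊ φ)(x) = Σ φ (S h₍₁₎ * x * h₍₂₎)`. -/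
def Lp (h : H) : Module.Dual ℂ H →ₗ[ℂ] Module.Dual ℂ H :=
  (sandwich ((TensorProduct.map S LinearMap.id) (Δ h))).dualMap

/-- `L^h₋(φ) = ⟨h, φ₍₃₎ S⁻¹(φ₍₁₎)⟩ φ₍₂₎`, i.e. `(L^h₋ φ)(x) = Σ φ (S⁻¹ h₍₂₎ * x * h₍₁₎)`,
with `S⁻¹ = S`. -/
def Lm (h : H) : Module.Dual ℂ H →ₗ[ℂ] Module.Dual ℂ H :=
  (sandwich ((TensorProduct.map S LinearMap.id) ((TensorProduct.comm ℂ H H) (Δ h)))).dualMap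

/-- `T^a₊(φ) = ⟨S a, φ₍₁₎⟩ φ₍₂₎`, i.e. `(T^a₊ φ)(x) = φ (S a * x)`. -/
def Tp (a : H) : Module.Dual ℂ H →ₗ[ℂ] Module.Dual ℂ H :=
  (LinearMap.mulLeft ℂ (S a)).dualMap

/-- `T^a₋(φ) = ⟨a, φ₍₂₎⟩ φ₍₁₎`, i.e. `(T^a₋ φ)(x) = φ (x * a)`. -/
def Tm (a : H) : Module.Dual ℂ H →ₗ[ℂ] Module.Dual ℂ H :=
  (LinearMap.mulRight ℂ a).dualMap

/-! Right-module versions (eq. (3.14) of the paper). -/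

/-- `L̃^h₊(φ) = ⟨h, S(φ₍₃₎) φ₍₁₎⟩ φ₍₂₎`, i.e. `(L̃^h₊ φ)(x) = Σ φ (h₍₂₎ * x * S h₍₁₎)`. -/
def Ltp (h : H) : Module.Dual ℂ H →ₗ[ℂ] Module.Dual ℂ H :=
  (sandwich ((TensorProduct.map LinearMap.id S) ((TensorProduct.comm ℂ H H) (Δ h)))).dualMap

/-- `L̃^h₋(φ) = ⟨h, φ₍₁₎ S⁻¹(φ₍₃₎)⟩ φ₍₂₎`, i.e. `(L̃^h₋ φ)(x) = Σ φ (h₍₁₎ * x * S⁻¹ h₍₂₎)`,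
with `S⁻¹ = S`. -/
def Ltm (h : H) : Module.Dual ℂ H →ₗ[ℂ] Module.Dual ℂ H :=
  (sandwich ((TensorProduct.map LinearMap.id S) (Δ h))).dualMap

/-- `T̃^a₊(φ) = ⟨a, φ₍₁₎⟩ φ₍₂₎`, i.e. `(T̃^a₊ φ)(x) = φ (a * x)`. -/
def Ttp (a : H) : Module.Dual ℂ H →ₗ[ℂ] Module.Dual ℂ H :=
  (LinearMap.mulLeft ℂ a).dualMap

/-- `T̃^a₋(φ) = ⟨S⁻¹ a, φ₍₂₎⟩ φ₍₁₎`, i.e. `(T̃^a₋ φ)(x) = φ (x * S⁻¹ a)`, with `S⁻¹ = S`. -/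
def Ttm (a : H) : Module.Dual ℂ H →ₗ[ℂ] Module.Dual ℂ H :=
  (LinearMap.mulRight ℂ (S a)).dualMap

/-- The antipode `S_{H*}` of the dual Hopf algebra: `S_{H*}(φ) = φ ∘ S`. -/
def Sdual : Module.Dual ℂ H →ₗ[ℂ] Module.Dual ℂ H := (S (H := H)).dualMap

/-- The composite edge operator `M^{(a,h)}₊ = T^a₊ ∘ L^h₊`. -/
def Mp (a h : H) : Module.Dual ℂ H →ₗ[ℂ] Module.Dual ℂ H := Tp a ∘ₗ Lp h

/-- The composite edge operator `M^{(a,h)}₋ = T^a₋ ∘ L^h₋`. -/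
def Mm (a h : H) : Module.Dual ℂ H →ₗ[ℂ] Module.Dual ℂ H := Tm a ∘ₗ Lm h

/-- The right action of `M(H)` on `H*` (eq. (2.10) of the paper):
`φ ◁ (a ⊗ h) = ⟨a h₍₁₎, φ₍₁₎⟩ ⟨S h₍₂₎, φ₍₃₎⟩ φ₍₂₎`,
i.e. `(ract φ a h)(x) = Σ φ (a * h₍₁₎ * x * S h₍₂₎)`. -/
def ract (φ : Module.Dual ℂ H) (a h : H) : Module.Dual ℂ H :=
  (sandwich ((TensorProduct.map (LinearMap.mulLeft ℂ a) S) (Δ h))).dualMap φ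

/-- The (convolution) multiplication of the dual Hopf algebra `H*`:
`(φ ∗ ψ)(x) = Σ φ(x₍₁₎) ψ(x₍₂₎)`. -/
def dualMul (φ ψ : Module.Dual ℂ H) : Module.Dual ℂ H :=
  (LinearMap.mul' ℂ ℂ) ∘ₗ (TensorProduct.map φ ψ) ∘ₗ Δ

/-- The opposite multiplication `∗op` of `H*`. -/
def dualMulOp (φ ψ : Module.Dual ℂ H) : Module.Dual ℂ H := dualMul ψ φ

/-! ### Iterated comultiplications, `Δⁿ h = Σ h₍₁₎ ⊗ (h₍₂₎ ⊗ (⋯ ⊗ h₍ₙ₊₁₎))` -/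

def Δ2 : H →ₗ[ℂ] H ⊗[ℂ] (H ⊗[ℂ] H) := (LinearMap.lTensor H Δ) ∘ₗ Δ
def Δ3 : H →ₗ[ℂ] H ⊗[ℂ] (H ⊗[ℂ] (H ⊗[ℂ] H)) := (LinearMap.lTensor H Δ2) ∘ₗ Δ
def Δ4 : H →ₗ[ℂ] H ⊗[ℂ] (H ⊗[ℂ] (H ⊗[ℂ] (H ⊗[ℂ] H))) := (LinearMap.lTensor H Δ3) ∘ₗ Δ
def Δ5 : H →ₗ[ℂ] H ⊗[ℂ] (H ⊗[ℂ] (H ⊗[ℂ] (H ⊗[ℂ] (H ⊗[ℂ] H)))) :=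
  (LinearMap.lTensor H Δ4) ∘ₗ Δ
def Δ6 : H →ₗ[ℂ] H ⊗[ℂ] (H ⊗[ℂ] (H ⊗[ℂ] (H ⊗[ℂ] (H ⊗[ℂ] (H ⊗[ℂ] H))))) :=
  (LinearMap.lTensor H Δ5) ∘ₗ Δ
def Δ7 : H →ₗ[ℂ] H ⊗[ℂ] (H ⊗[ℂ] (H ⊗[ℂ] (H ⊗[ℂ] (H ⊗[ℂ] (H ⊗[ℂ] (H ⊗[ℂ] H)))))) :=
  (LinearMap.lTensor H Δ6) ∘ₗ Δ
def Δ8 : H →ₗ[ℂ]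
    H ⊗[ℂ] (H ⊗[ℂ] (H ⊗[ℂ] (H ⊗[ℂ] (H ⊗[ℂ] (H ⊗[ℂ] (H ⊗[ℂ] (H ⊗[ℂ] H))))))) :=
  (LinearMap.lTensor H Δ7) ∘ₗ Δ
def Δ9 : H →ₗ[ℂ]
    H ⊗[ℂ] (H ⊗[ℂ] (H ⊗[ℂ] (H ⊗[ℂ] (H ⊗[ℂ] (H ⊗[ℂ] (H ⊗[ℂ] (H ⊗[ℂ] (H ⊗[ℂ] H)))))))) :=
  (LinearMap.lTensor H Δ8) ∘ₗ Δ

lemma mulLeft_add (a a' : H) :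
    LinearMap.mulLeft ℂ (a + a') = LinearMap.mulLeft ℂ a + LinearMap.mulLeft ℂ a' :=
  LinearMap.ext fun x => add_mul a a' x

lemma mulLeft_smul (c : ℂ) (a : H) :
    LinearMap.mulLeft ℂ (c • a) = c • LinearMap.mulLeft ℂ a :=
  LinearMap.ext fun x => smul_mul_assoc c a x

/-! ### The mirror bicrossproduct `M(H) = H^cop ⋈ H` on the vector space `H ⊗ H` -/

/-- `(h₍₁₎ ⊗ h₍₂₎) ⊗ h₍₃₎` version of the 2-fold comultiplication. -/
def Δ2' : H →ₗ[ℂ] (H ⊗[ℂ] H) ⊗[ℂ] H := (LinearMap.rTensor H Δ) ∘ₗ Δ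

/-- `mulAction2 ((u ⊗ v) ⊗ w) (b ⊗ g) = (u * b * v) ⊗ (w * g)`. -/
def mulAction2 : (H ⊗[ℂ] H) ⊗[ℂ] H →ₗ[ℂ] (H ⊗[ℂ] H) →ₗ[ℂ] (H ⊗[ℂ] H) :=
  TensorProduct.lift <| LinearMap.mk₂ ℂ
    (fun (uv : H ⊗[ℂ] H) (w : H) =>
      TensorProduct.map (sandwich uv) (LinearMap.mulLeft ℂ w))
    (fun uv uv' w => by (try dsimp only); rw [map_add, TensorProduct.map_add_left])
    (fun c uv w => by (try dsimp only); rw [map_smul, TensorProduct.map_smul_left])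
    (fun uv w w' => by (try dsimp only); rw [mulLeft_add, TensorProduct.map_add_right])
    (fun c uv w => by (try dsimp only); rw [mulLeft_smul, TensorProduct.map_smul_right])

/-- The product of the mirror bicrossproduct `M(H)`:
`μM (a ⊗ h) (b ⊗ g) = Σ (a * h₍₁₎ * b * S h₍₂₎) ⊗ (h₍₃₎ * g)`. -/
def μM : (H ⊗[ℂ] H) →ₗ[ℂ] (H ⊗[ℂ] H) →ₗ[ℂ] (H ⊗[ℂ] H) :=
  TensorProduct.lift <| LinearMap.mk₂ ℂ
    (fun (a h : H) =>
      mulAction2 ((TensorProduct.map (TensorProduct.map (LinearMap.mulLeft ℂ a) S)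
        LinearMap.id) (Δ2' h)))
    (fun a a' h => by
      try dsimp only
      rw [mulLeft_add, TensorProduct.map_add_left, TensorProduct.map_add_left,
        LinearMap.add_apply, map_add])
    (fun c a h => by
      try dsimp only
      rw [mulLeft_smul, TensorProduct.map_smul_left, TensorProduct.map_smul_left,
        LinearMap.smul_apply, map_smul])
    (fun a h h' => by (try dsimp only); rw [map_add, map_add, map_add])
    (fun c a h => by (try dsimp only); rw [map_smul, map_smul, map_smul])

/-- The unit `1 ⊗ 1` of `M(H)`. -/
def oneM : H ⊗[ℂ] H := (1 : H) ⊗ₜ[ℂ] (1 : H)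

/-- The counit of `M(H)`: `εM (a ⊗ h) = ε a * ε h`. -/
def εM : H ⊗[ℂ] H →ₗ[ℂ] ℂ :=
  (TensorProduct.lid ℂ ℂ).toLinearMap ∘ₗ TensorProduct.map ε ε

/-- Auxiliary map for the coproduct of `M(H)`: for fixed `a₁, a₂`, it sends
`h₁ ⊗ (h₂ ⊗ (h₃ ⊗ h₄))` to `(a₂ ⊗ h₂) ⊗ ((a₁ * h₁ * S h₃) ⊗ h₄)`. -/
def deltaMAux (a₁ a₂ : H) :
    H ⊗[ℂ] (H ⊗[ℂ] (H ⊗[ℂ] H)) →ₗ[ℂ] (H ⊗[ℂ] H) ⊗[ℂ] (H ⊗[ℂ] H) :=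
  (TensorProduct.map (TensorProduct.mk ℂ H H a₂) LinearMap.id) ∘ₗ
  (TensorProduct.map LinearMap.id
    (TensorProduct.map (LinearMap.mul' ℂ H) LinearMap.id)) ∘ₗ
  (TensorProduct.map LinearMap.id (TensorProduct.assoc ℂ H H H).symm.toLinearMap) ∘ₗ
  (TensorProduct.assoc ℂ H H (H ⊗[ℂ] H)).toLinearMap ∘ₗ
  (TensorProduct.map (TensorProduct.comm ℂ H H).toLinearMap LinearMap.id) ∘ₗ
  (TensorProduct.assoc ℂ H H (H ⊗[ℂ] H)).symm.toLinearMap ∘ₗ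
  (TensorProduct.map (LinearMap.mulLeft ℂ a₁)
    (TensorProduct.map LinearMap.id (TensorProduct.map S LinearMap.id)))

lemma deltaMAux_add_left (a₁ a₁' a₂ : H) :
    deltaMAux (a₁ + a₁') a₂ = deltaMAux a₁ a₂ + deltaMAux (H := H) a₁' a₂ := by
  unfold deltaMAux
  rw [mulLeft_add, TensorProduct.map_add_left]
  simp only [LinearMap.comp_add]

lemma deltaMAux_smul_left (c : ℂ) (a₁ a₂ : H) :
    deltaMAux (c • a₁) a₂ = c • deltaMAux (H := H) a₁ a₂ := by
  unfold deltaMAux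
  rw [mulLeft_smul, TensorProduct.map_smul_left]
  simp only [LinearMap.comp_smul]

lemma deltaMAux_add_right (a₁ a₂ a₂' : H) :
    deltaMAux a₁ (a₂ + a₂') = deltaMAux a₁ a₂ + deltaMAux (H := H) a₁ a₂' := by
  unfold deltaMAux
  rw [map_add, TensorProduct.map_add_left]
  simp only [LinearMap.add_comp]

lemma deltaMAux_smul_right (c : ℂ) (a₁ a₂ : H) :
    deltaMAux a₁ (c • a₂) = c • deltaMAux (H := H) a₁ a₂ := by
  unfold deltaMAux
  rw [map_smul, TensorProduct.map_smul_left]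
  simp only [LinearMap.smul_comp]

/-- `deltaG (a₁ ⊗ a₂) = deltaMAux a₁ a₂`, assembled linearly. -/
def deltaG : H ⊗[ℂ] H →ₗ[ℂ]
    (H ⊗[ℂ] (H ⊗[ℂ] (H ⊗[ℂ] H)) →ₗ[ℂ] (H ⊗[ℂ] H) ⊗[ℂ] (H ⊗[ℂ] H)) :=
  TensorProduct.lift <| LinearMap.mk₂ ℂ deltaMAux
    deltaMAux_add_left deltaMAux_smul_left deltaMAux_add_right deltaMAux_smul_right

/-- The coproduct of `M(H)`:
`ΔM (a ⊗ h) = Σ (a₍₂₎ ⊗ h₍₂₎) ⊗ ((a₍₁₎ * h₍₁₎ * S h₍₃₎) ⊗ h₍₄₎)`. -/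
def ΔM : H ⊗[ℂ] H →ₗ[ℂ] (H ⊗[ℂ] H) ⊗[ℂ] (H ⊗[ℂ] H) :=
  TensorProduct.lift <| LinearMap.mk₂ ℂ
    (fun (a h : H) => (deltaG (Δ a)) (Δ3 h))
    (fun a a' h => by (try dsimp only); rw [map_add, map_add, LinearMap.add_apply])
    (fun c a h => by (try dsimp only); rw [map_smul, map_smul, LinearMap.smul_apply])
    (fun a h h' => by (try dsimp only); rw [map_add, map_add])
    (fun c a h => by (try dsimp only); rw [map_smul, map_smul])

/-- The componentwise (tensor-square) product on `M(H) ⊗ M(H)`. -/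
def tensorMul2 :
    ((H ⊗[ℂ] H) ⊗[ℂ] (H ⊗[ℂ] H)) →ₗ[ℂ] ((H ⊗[ℂ] H) ⊗[ℂ] (H ⊗[ℂ] H)) →ₗ[ℂ]
      ((H ⊗[ℂ] H) ⊗[ℂ] (H ⊗[ℂ] H)) :=
  TensorProduct.lift <| LinearMap.mk₂ ℂ
    (fun (u v : H ⊗[ℂ] H) => TensorProduct.map (μM u) (μM v))
    (fun u u' v => by (try dsimp only); rw [map_add, TensorProduct.map_add_left])
    (fun c u v => by (try dsimp only); rw [map_smul, TensorProduct.map_smul_left])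
    (fun u v v' => by (try dsimp only); rw [map_add, TensorProduct.map_add_right])
    (fun c u v => by (try dsimp only); rw [map_smul, TensorProduct.map_smul_right])

/-- The antipode candidate of `M(H)`:
`SM (a ⊗ h) = Σ (1 ⊗ S h₍₂₎) · (S (a * h₍₁₎ * S h₍₃₎) ⊗ 1)`,
where `·` is the mirror product `μM`. -/
def SM : H ⊗[ℂ] H →ₗ[ℂ] H ⊗[ℂ] H :=
  TensorProduct.lift <| LinearMap.mk₂ ℂ
    (fun (a h : H) =>
      (TensorProduct.lift μM)
        ((TensorProduct.map
            ((TensorProduct.mk ℂ H H 1) ∘ₗ S)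
            (((TensorProduct.mk ℂ H H).flip 1) ∘ₗ S ∘ₗ (LinearMap.mul' ℂ H) ∘ₗ
              (TensorProduct.map (LinearMap.mulLeft ℂ a) S)))
          ((TensorProduct.assoc ℂ H H H).toLinearMap
            ((TensorProduct.map (TensorProduct.comm ℂ H H).toLinearMap LinearMap.id)
              ((TensorProduct.assoc ℂ H H H).symm.toLinearMap (Δ2 h))))))
    (fun a a' h => by
      try dsimp only
      rw [mulLeft_add, TensorProduct.map_add_left, LinearMap.comp_add, LinearMap.comp_add,
        LinearMap.comp_add, TensorProduct.map_add_right, LinearMap.add_apply, map_add])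
    (fun c a h => by
      try dsimp only
      rw [mulLeft_smul, TensorProduct.map_smul_left, LinearMap.comp_smul, LinearMap.comp_smul,
        LinearMap.comp_smul, TensorProduct.map_smul_right, LinearMap.smul_apply, map_smul])
    (fun a h h' => by (try dsimp only); simp only [map_add])
    (fun c a h => by (try dsimp only); simp only [map_smul])

/-- `ℓ ∈ H` is a normalized (two-sided) Haar integral:
`x ℓ = ε(x) ℓ = ℓ x` for all `x`, and `ε(ℓ) = 1`. -/
def IsHaarIntegral (ℓ : H) : Prop :=
  ε ℓ = 1 ∧ ∀ x : H, x * ℓ = ε x • ℓ ∧ ℓ * x = ε x • ℓ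

/-- Fourfold tensor product of operators on `H*`, acting on the four edges
`ψ¹ ⊗ (ψ² ⊗ (ψ³ ⊗ ψ⁴))`. -/
def map4 (f₁ f₂ f₃ f₄ : Module.Dual ℂ H →ₗ[ℂ] Module.Dual ℂ H) :
    Module.Dual ℂ H ⊗[ℂ] (Module.Dual ℂ H ⊗[ℂ] (Module.Dual ℂ H ⊗[ℂ] Module.Dual ℂ H))
      →ₗ[ℂ]
    Module.Dual ℂ H ⊗[ℂ] (Module.Dual ℂ H ⊗[ℂ] (Module.Dual ℂ H ⊗[ℂ] Module.Dual ℂ H)) :=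
  TensorProduct.map f₁ (TensorProduct.map f₂ (TensorProduct.map f₃ f₄))



end SemidualKitaev

namespace SemidualAux

variable {H : Type} [Ring H] [HopfAlgebra ℂ H]

open Coalgebra HopfAlgebra

/-- Convolution product of linear maps from a coalgebra `C` to `H`. -/
def conv {C : Type} [AddCommGroup C] [Module ℂ C] [Coalgebra ℂ C]
    (f g : C →ₗ[ℂ] H) : C →ₗ[ℂ] H :=
  LinearMap.mul' ℂ H ∘ₗ TensorProduct.map f g ∘ₗ Coalgebra.comul

/-- The convolution unit. -/
def convOne {C : Type} [AddCommGroup C] [Module ℂ C] [Coalgebra ℂ C] : C →ₗ[ℂ] H :=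
  Algebra.linearMap ℂ H ∘ₗ Coalgebra.counit

variable {C : Type} [AddCommGroup C] [Module ℂ C] [Coalgebra ℂ C]

lemma conv_apply_repr {ι : Type*} (f g : C →ₗ[ℂ] H) {c : C} (r : Coalgebra.Repr ℂ c ι) :
    conv f g c = ∑ i ∈ r.index, f (r.left i) * g (r.right i) := by
  simp only [conv, LinearMap.comp_apply, ← r.eq, map_sum, TensorProduct.map_tmul,
    LinearMap.mul'_apply]

lemma conv_one_right (f : C →ₗ[ℂ] H) : conv f convOne = f := by
  ext c
  set r := ℛ ℂ c with hr
  have key := congrArg (TensorProduct.rid ℂ C) (Coalgebra.sum_tmul_counit_eq r)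
  simp only [map_sum, TensorProduct.rid_tmul, one_smul] at key
  rw [conv_apply_repr f convOne r]
  calc ∑ i ∈ r.index, f (r.left i) * convOne (r.right i)
      = ∑ i ∈ r.index, f (Coalgebra.counit (R := ℂ) (r.right i) • r.left i) := by
        refine Finset.sum_congr rfl fun i _ => ?_
        simp [convOne, Algebra.algebraMap_eq_smul_one, mul_smul_comm]
    _ = f c := by rw [← map_sum, key]

lemma conv_one_left (f : C →ₗ[ℂ] H) : conv convOne f = f := by
  ext c
  set r := ℛ ℂ c with hr
  have key := congrArg (TensorProduct.lid ℂ C) (Coalgebra.sum_counit_tmul_eq r)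
  simp only [map_sum, TensorProduct.lid_tmul, one_smul] at key
  rw [conv_apply_repr convOne f r]
  calc ∑ i ∈ r.index, convOne (r.left i) * f (r.right i)
      = ∑ i ∈ r.index, f (Coalgebra.counit (R := ℂ) (r.left i) • r.right i) := by
        refine Finset.sum_congr rfl fun i _ => ?_
        simp [convOne, Algebra.algebraMap_eq_smul_one, smul_mul_assoc]
    _ = f c := by rw [← map_sum, key]

lemma conv_assoc (f g h : C →ₗ[ℂ] H) : conv (conv f g) h = conv f (conv g h) := by
  ext c
  set r := ℛ ℂ c with hr
  set r₁ : (i : C × C) → Coalgebra.Repr ℂ (r.left i) (C × C) := fun i => ℛ ℂ (r.left i) with hr₁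
  set r₂ : (i : C × C) → Coalgebra.Repr ℂ (r.right i) (C × C) := fun i => ℛ ℂ (r.right i) with hr₂
  have key := congrArg (LinearMap.mul' ℂ H ∘ₗ
      TensorProduct.map f (LinearMap.mul' ℂ H ∘ₗ TensorProduct.map g h))
    (Coalgebra.sum_tmul_tmul_eq r r₁ r₂)
  simp only [map_sum, LinearMap.comp_apply, TensorProduct.map_tmul,
    LinearMap.mul'_apply] at key
  rw [conv_apply_repr (conv f g) h r, conv_apply_repr f (conv g h) r]
  calc ∑ i ∈ r.index, conv f g (r.left i) * h (r.right i)
      = ∑ i ∈ r.index, ∑ j ∈ (r₁ i).index,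
          f ((r₁ i).left j) * (g ((r₁ i).right j) * h (r.right i)) := by
        refine Finset.sum_congr rfl fun i _ => ?_
        rw [conv_apply_repr f g (r₁ i), Finset.sum_mul]
        exact Finset.sum_congr rfl fun j _ => mul_assoc _ _ _
    _ = ∑ i ∈ r.index, ∑ j ∈ (r₂ i).index,
          f (r.left i) * (g ((r₂ i).left j) * h ((r₂ i).right j)) := key
    _ = ∑ i ∈ r.index, f (r.left i) * conv g h (r.right i) := by
        refine Finset.sum_congr rfl fun i _ => ?_
        rw [conv_apply_repr g h (r₂ i), Finset.mul_sum]

end SemidualAux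

namespace SemidualAux

variable {H : Type} [Ring H] [HopfAlgebra ℂ H]

open Coalgebra HopfAlgebra

/-- A representation of `comul (a ⊗ₜ b)` built from representations of `a` and `b`. -/
def reprTmul {ι κ : Type*} {a b : H} (r : Coalgebra.Repr ℂ a ι) (s : Coalgebra.Repr ℂ b κ) :
    Coalgebra.Repr ℂ (a ⊗ₜ[ℂ] b) (ι × κ) where
  index := r.index ×ˢ s.index
  left := fun p => r.left p.1 ⊗ₜ[ℂ] s.left p.2
  right := fun p => r.right p.1 ⊗ₜ[ℂ] s.right p.2
  eq := by
    have : Coalgebra.comul (R := ℂ) (a ⊗ₜ[ℂ] b) =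
        TensorProduct.tensorTensorTensorComm ℂ H H H H
          (Coalgebra.comul a ⊗ₜ[ℂ] Coalgebra.comul b) := rfl
    rw [this, ← r.eq, ← s.eq]
    rw [Finset.sum_product]
    rw [TensorProduct.sum_tmul, map_sum]
    refine Finset.sum_congr rfl fun i _ => ?_
    rw [TensorProduct.tmul_sum, map_sum]
    refine Finset.sum_congr rfl fun j _ => ?_
    simp [TensorProduct.tensorTensorTensorComm_tmul]

/-- A representation of `comul (a * b)` built from representations of `a` and `b`. -/
def reprMul {ι κ : Type*} {a b : H} (r : Coalgebra.Repr ℂ a ι) (s : Coalgebra.Repr ℂ b κ) :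
    Coalgebra.Repr ℂ (a * b) (ι × κ) where
  index := r.index ×ˢ s.index
  left := fun p => r.left p.1 * s.left p.2
  right := fun p => r.right p.1 * s.right p.2
  eq := by
    rw [Bialgebra.comul_mul, ← r.eq, ← s.eq, Finset.sum_mul_sum, Finset.sum_product]
    refine Finset.sum_congr rfl fun i _ => Finset.sum_congr rfl fun j _ => ?_
    rw [Algebra.TensorProduct.tmul_mul_tmul]

lemma counit_tmul (a b : H) :
    Coalgebra.counit (R := ℂ) (a ⊗ₜ[ℂ] b) =
      Coalgebra.counit (R := ℂ) a * Coalgebra.counit (R := ℂ) b := mul_comm _ _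

lemma claim1 :
    conv ((antipode (R := ℂ) (A := H)) ∘ₗ LinearMap.mul' ℂ H) (LinearMap.mul' ℂ H) =
      (convOne : H ⊗[ℂ] H →ₗ[ℂ] H) := by
  apply TensorProduct.ext'
  intro a b
  set r := ℛ ℂ a
  set s := ℛ ℂ b
  rw [conv_apply_repr _ _ (reprTmul r s)]
  have key := HopfAlgebra.sum_antipode_mul_eq_algebraMap_counit (R := ℂ) (reprMul r s)
  simp only [reprMul] at key
  simp only [reprTmul, LinearMap.comp_apply, LinearMap.mul'_apply]
  rw [key]
  simp [convOne, counit_tmul, Bialgebra.counit_mul]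
  exact Algebra.commutes _ _

lemma claim2 :
    conv (LinearMap.mul' ℂ H)
      (LinearMap.mul' ℂ H ∘ₗ
        TensorProduct.map (antipode (R := ℂ)) (antipode (R := ℂ)) ∘ₗ
        (TensorProduct.comm ℂ H H).toLinearMap) =
      (convOne : H ⊗[ℂ] H →ₗ[ℂ] H) := by
  apply TensorProduct.ext'
  intro a b
  set r := ℛ ℂ a
  set s := ℛ ℂ b
  rw [conv_apply_repr _ _ (reprTmul r s)]
  have hb := HopfAlgebra.sum_mul_antipode_eq_algebraMap_counit (R := ℂ) s
  have ha := HopfAlgebra.sum_mul_antipode_eq_algebraMap_counit (R := ℂ) r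
  simp only [reprTmul, LinearMap.comp_apply, LinearMap.mul'_apply,
    TensorProduct.comm_tmul, TensorProduct.map_tmul, LinearEquiv.coe_coe]
  rw [Finset.sum_product]
  calc ∑ i ∈ r.index, ∑ j ∈ s.index,
        r.left i * s.left j * (antipode (R := ℂ) (s.right j) * antipode (R := ℂ) (r.right i))
      = ∑ i ∈ r.index,
          (r.left i * ∑ j ∈ s.index, s.left j * antipode (R := ℂ) (s.right j)) *
            antipode (R := ℂ) (r.right i) := by
        refine Finset.sum_congr rfl fun i _ => ?_
        rw [Finset.mul_sum, Finset.sum_mul]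
        refine Finset.sum_congr rfl fun j _ => ?_
        noncomm_ring
    _ = (convOne : H ⊗[ℂ] H →ₗ[ℂ] H) (a ⊗ₜ[ℂ] b) := by
        rw [hb]
        simp only [Algebra.algebraMap_eq_smul_one]
        have : ∑ i ∈ r.index, (r.left i * (Coalgebra.counit (R := ℂ) b • 1)) *
              antipode (R := ℂ) (r.right i)
            = Coalgebra.counit (R := ℂ) b •
                ∑ i ∈ r.index, r.left i * antipode (R := ℂ) (r.right i) := by
          rw [Finset.smul_sum]
          refine Finset.sum_congr rfl fun i _ => ?_
          rw [mul_smul_comm, mul_one, smul_mul_assoc]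
        rw [this, ha]
        simp only [convOne, LinearMap.comp_apply, counit_tmul, Algebra.linearMap_apply,
          Algebra.algebraMap_eq_smul_one, smul_smul]
        rw [mul_comm]

lemma antipode_mul (a b : H) :
    antipode (R := ℂ) (a * b) = antipode (R := ℂ) b * antipode (R := ℂ) (A := H) a := by
  have main : (antipode (R := ℂ) (A := H)) ∘ₗ LinearMap.mul' ℂ H =
      LinearMap.mul' ℂ H ∘ₗ
        TensorProduct.map (antipode (R := ℂ)) (antipode (R := ℂ)) ∘ₗ
        (TensorProduct.comm ℂ H H).toLinearMap := by
    set F := (antipode (R := ℂ) (A := H)) ∘ₗ LinearMap.mul' ℂ H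
    set G := LinearMap.mul' ℂ H ∘ₗ
        TensorProduct.map (antipode (R := ℂ) (A := H)) (antipode (R := ℂ)) ∘ₗ
        (TensorProduct.comm ℂ H H).toLinearMap
    calc F = conv F convOne := (conv_one_right F).symm
      _ = conv F (conv (LinearMap.mul' ℂ H) G) := by rw [claim2]
      _ = conv (conv F (LinearMap.mul' ℂ H)) G := (conv_assoc _ _ _).symm
      _ = conv convOne G := by rw [claim1]
      _ = G := conv_one_left G
  have := congrArg (fun f : H ⊗[ℂ] H →ₗ[ℂ] H => f (a ⊗ₜ[ℂ] b)) main
  simpa using this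

lemma antipode_one : antipode (R := ℂ) (A := H) 1 = 1 := by
  have := HopfAlgebra.mul_antipode_rTensor_comul_apply (R := ℂ) (A := H) 1
  simpa [Algebra.TensorProduct.one_def] using this

end SemidualAux

namespace SemidualKitaev

variable {H : Type} [Ring H] [HopfAlgebra ℂ H]

/-! ### Auxiliary lemmas for Statement 2 -/

section Aux

open SemidualAux

/-- Twisted multiplication on `H ⊗ H`: `(p ⊗ q) ⋄ (u ⊗ v) = (p u) ⊗ (v q)`. -/
def tw : (H ⊗[ℂ] H) ⊗[ℂ] (H ⊗[ℂ] H) →ₗ[ℂ] H ⊗[ℂ] H :=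
  (TensorProduct.map (LinearMap.mul' ℂ H)
      ((LinearMap.mul' ℂ H) ∘ₗ (TensorProduct.comm ℂ H H).toLinearMap)) ∘ₗ
    (TensorProduct.tensorTensorTensorComm ℂ H H H H).toLinearMap

@[simp] lemma tw_tmul (p q u v : H) :
    tw ((p ⊗ₜ[ℂ] q) ⊗ₜ[ℂ] (u ⊗ₜ[ℂ] v)) = (p * u) ⊗ₜ[ℂ] (v * q) := by
  simp [tw]

lemma sandwich_comp (t' t : H ⊗[ℂ] H) :
    sandwich t' ∘ₗ sandwich t = sandwich (tw (t' ⊗ₜ[ℂ] t)) := by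
  induction t' using TensorProduct.induction_on with
  | zero => simp only [map_zero, LinearMap.zero_comp, TensorProduct.zero_tmul]
  | add t₁ t₂ h₁ h₂ =>
      simp only [map_add, LinearMap.add_comp, TensorProduct.add_tmul, h₁, h₂]
  | tmul p q =>
      induction t using TensorProduct.induction_on with
      | zero => simp only [map_zero, LinearMap.comp_zero, TensorProduct.tmul_zero]
      | add t₁ t₂ h₁ h₂ =>
          simp only [map_add, LinearMap.comp_add, TensorProduct.tmul_add, h₁, h₂]
      | tmul u v =>
          ext x
          simp only [LinearMap.comp_apply, sandwich_tmul, tw_tmul, mul_assoc]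

lemma tw_mapIdS_mul (t' t : H ⊗[ℂ] H) :
    tw ((TensorProduct.map LinearMap.id (S (H := H)) t') ⊗ₜ[ℂ]
        (TensorProduct.map LinearMap.id S t)) =
      TensorProduct.map LinearMap.id S (t' * t) := by
  induction t' using TensorProduct.induction_on with
  | zero => simp only [map_zero, TensorProduct.zero_tmul, zero_mul]
  | add t₁ t₂ h₁ h₂ =>
      simp only [map_add, TensorProduct.add_tmul, add_mul, h₁, h₂]
  | tmul p q =>
      induction t using TensorProduct.induction_on with
      | zero => simp only [map_zero, TensorProduct.tmul_zero, mul_zero]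
      | add t₁ t₂ h₁ h₂ =>
          simp only [map_add, TensorProduct.tmul_add, mul_add, h₁, h₂]
      | tmul u v =>
          simp only [TensorProduct.map_tmul, LinearMap.id_coe, id_eq, tw_tmul,
            Algebra.TensorProduct.tmul_mul_tmul]
          rw [antipode_mul]

lemma tw_mapIdS_comm_mul (t' t : H ⊗[ℂ] H) :
    tw ((TensorProduct.map LinearMap.id (S (H := H)) ((TensorProduct.comm ℂ H H) t')) ⊗ₜ[ℂ]
        (TensorProduct.map LinearMap.id S ((TensorProduct.comm ℂ H H) t))) =
      TensorProduct.map LinearMap.id S ((TensorProduct.comm ℂ H H) (t' * t)) := by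
  induction t' using TensorProduct.induction_on with
  | zero => simp only [map_zero, TensorProduct.zero_tmul, zero_mul]
  | add t₁ t₂ h₁ h₂ =>
      simp only [map_add, TensorProduct.add_tmul, add_mul, h₁, h₂]
  | tmul p q =>
      induction t using TensorProduct.induction_on with
      | zero => simp only [map_zero, TensorProduct.tmul_zero, mul_zero]
      | add t₁ t₂ h₁ h₂ =>
          simp only [map_add, TensorProduct.tmul_add, mul_add, h₁, h₂]
      | tmul u v =>
          simp only [Algebra.TensorProduct.tmul_mul_tmul, TensorProduct.comm_tmul,
            TensorProduct.map_tmul, LinearMap.id_coe, id_eq, tw_tmul]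
          rw [antipode_mul]

lemma sandwich_one : sandwich ((1 : H) ⊗ₜ[ℂ] (1 : H)) = LinearMap.id := by
  ext x
  simp

end Aux

/-- For all `h, h'` in `H` and for both sign choices, the right-module
edge operators satisfy `L̃^h_± ∘ L̃^{h'}_± = L̃^{h'h}_±` and `L̃^1_± = id`; that is, the
families `L̃₊` and `L̃₋` each make `H*` into a right `H`-module. -/
theorem statement2 [FiniteDimensional ℂ H] (hS : ∀ x : H, S (S x) = x) :
    (∀ h h' : H, Ltp h ∘ₗ Ltp h' = Ltp (h' * h)) ∧
    (∀ h h' : H, Ltm h ∘ₗ Ltm h' = Ltm (h' * h)) ∧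
    Ltp (1 : H) = LinearMap.id ∧
    Ltm (1 : H) = LinearMap.id := by
  refine ⟨?_, ?_, ?_, ?_⟩
  · intro h h'
    unfold Ltp
    rw [LinearMap.dualMap_comp_dualMap, sandwich_comp]
    congr 1
    rw [show Δ (h' * h) = Δ h' * Δ h from Bialgebra.comul_mul h' h]
    exact congrArg sandwich (tw_mapIdS_comm_mul (Δ h') (Δ h))
  · intro h h'
    unfold Ltm
    rw [LinearMap.dualMap_comp_dualMap, sandwich_comp]
    congr 1
    rw [show Δ (h' * h) = Δ h' * Δ h from Bialgebra.comul_mul h' h]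
    exact congrArg sandwich (tw_mapIdS_mul (Δ h') (Δ h))
  · unfold Ltp
    rw [show Δ (1 : H) = (1 : H ⊗[ℂ] H) from Bialgebra.comul_one]
    rw [show ((1 : H ⊗[ℂ] H) : H ⊗[ℂ] H) = (1 : H) ⊗ₜ[ℂ] (1 : H) from rfl]
    rw [show (TensorProduct.comm ℂ H H) ((1 : H) ⊗ₜ[ℂ] (1 : H)) = (1 : H) ⊗ₜ[ℂ] (1 : H)
      from rfl]
    simp only [TensorProduct.map_tmul, LinearMap.id_coe, id_eq]
    rw [SemidualAux.antipode_one, sandwich_one, LinearMap.dualMap_id]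
  · unfold Ltm
    rw [show Δ (1 : H) = (1 : H ⊗[ℂ] H) from Bialgebra.comul_one]
    rw [show ((1 : H ⊗[ℂ] H) : H ⊗[ℂ] H) = (1 : H) ⊗ₜ[ℂ] (1 : H) from rfl]
    simp only [TensorProduct.map_tmul, LinearMap.id_coe, id_eq]
    rw [SemidualAux.antipode_one, sandwich_one, LinearMap.dualMap_id]


end SemidualKitaev
end
end

section
/- Denoting by S_{H*} the antipode of the dual Hopf algebra H*, the edge operators satisfy the intertwining relations S_{H*} ∘ L^h₋ = L^h₊ ∘ S_{H*} and S_{H*} ∘ T^a₋ = T^a₊ ∘ S_{H*} for all h, a ∈ H. -/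
/-!
Common setup for formalizing "Ribbon operators in the semidual lattice code model"
(Soglohu–Osei–Osumanu).

`H` is a Hopf algebra over `ℂ`.  Its dual Hopf algebra `H*` is realised as
`Module.Dual ℂ H`, with evaluation pairing `⟨h, φ⟩ = φ h`.  The multiplication of
`H*` is dual to the comultiplication of `H` and the comultiplication of `H*` is
dual to the multiplication of `H`; consequently every edge operator below, given
in the paper by a Sweedler formula on `H*`, is pre-composition
(`LinearMap.dualMap`) with an explicit linear endomorphism of `H`.  For instance
`L^h₊(φ) = ⟨h, S(φ₍₁₎) φ₍₃₎⟩ φ₍₂₎` is exactly `(L^h₊ φ)(x) = Σ φ (S h₍₁₎ * x * h₍₂₎)`.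
Since the antipode is assumed involutive (`S⁻¹ = S`), occurrences of `S⁻¹` are
rendered as `S`.
-/

open TensorProduct

noncomputable section

namespace SemidualKitaev

variable {H : Type} [Ring H] [HopfAlgebra ℂ H]

section AntipodeAntiMul

open Coalgebra HopfAlgebra

variable {C : Type} [AddCommGroup C] [Module ℂ C] [Coalgebra ℂ C]

/-- Convolution product of linear maps `C →ₗ H` for a coalgebra `C`. -/
def conv (f g : C →ₗ[ℂ] H) : C →ₗ[ℂ] H :=
  LinearMap.mul' ℂ H ∘ₗ TensorProduct.map f g ∘ₗ Coalgebra.comul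

/-- Convolution unit. -/
def convOne : C →ₗ[ℂ] H := Algebra.linearMap ℂ H ∘ₗ Coalgebra.counit

lemma conv_repr (f g : C →ₗ[ℂ] H) (c : C) {ι : Type} (r : Coalgebra.Repr ℂ c ι) :
    conv f g c = ∑ i ∈ r.index, f (r.left i) * g (r.right i) := by
  simp [conv, ← r.eq, map_sum]

lemma conv_assoc (f g k : C →ₗ[ℂ] H) : conv (conv f g) k = conv f (conv g k) := by
  ext c
  set r := Coalgebra.Repr.arbitrary ℂ c with hr
  set a₁ : ∀ i : C × C, Coalgebra.Repr ℂ (r.left i) (C × C) :=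
    fun i => Coalgebra.Repr.arbitrary ℂ (r.left i) with ha₁
  set a₂ : ∀ i : C × C, Coalgebra.Repr ℂ (r.right i) (C × C) :=
    fun i => Coalgebra.Repr.arbitrary ℂ (r.right i) with ha₂
  have key := Coalgebra.sum_tmul_tmul_eq r a₁ a₂
  have key2 := congrArg
    (LinearMap.mul' ℂ H ∘ₗ TensorProduct.map f (LinearMap.mul' ℂ H ∘ₗ TensorProduct.map g k)) key
  simp only [map_sum, LinearMap.comp_apply, TensorProduct.map_tmul,
    LinearMap.mul'_apply] at key2
  rw [conv_repr _ _ c r, conv_repr _ _ c r]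
  calc ∑ i ∈ r.index, conv f g (r.left i) * k (r.right i)
      = ∑ i ∈ r.index, ∑ j ∈ (a₁ i).index,
          f ((a₁ i).left j) * (g ((a₁ i).right j) * k (r.right i)) := by
        refine Finset.sum_congr rfl fun i _ => ?_
        rw [conv_repr _ _ _ (a₁ i), Finset.sum_mul]
        exact Finset.sum_congr rfl fun j _ => mul_assoc _ _ _
    _ = ∑ i ∈ r.index, ∑ j ∈ (a₂ i).index,
          f (r.left i) * (g ((a₂ i).left j) * k ((a₂ i).right j)) := key2
    _ = ∑ i ∈ r.index, f (r.left i) * conv g k (r.right i) := by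
        refine Finset.sum_congr rfl fun i _ => ?_
        rw [conv_repr _ _ _ (a₂ i), Finset.mul_sum]

lemma conv_one (f : C →ₗ[ℂ] H) : conv f convOne = f := by
  ext c
  set r := Coalgebra.Repr.arbitrary ℂ c with hr
  have key := Coalgebra.sum_map_tmul_counit_eq (R := ℂ) f c (repr := r)
  have key2 := congrArg (TensorProduct.rid ℂ H) key
  simp only [map_sum, TensorProduct.rid_tmul] at key2
  rw [conv_repr _ _ c r]
  simpa [convOne, Algebra.smul_def, mul_comm, Algebra.commutes] using key2

lemma one_conv (f : C →ₗ[ℂ] H) : conv convOne f = f := by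
  ext c
  set r := Coalgebra.Repr.arbitrary ℂ c with hr
  have key := Coalgebra.sum_counit_tmul_map_eq (R := ℂ) f c (repr := r)
  have key2 := congrArg (TensorProduct.lid ℂ H) key
  simp only [map_sum, TensorProduct.lid_tmul] at key2
  rw [conv_repr _ _ c r]
  simpa [convOne, Algebra.smul_def] using key2

lemma conv_precomp (f g : H →ₗ[ℂ] H) (π : C →ₗ[ℂ] H)
    (h1 : Coalgebra.comul ∘ₗ π = TensorProduct.map π π ∘ₗ Coalgebra.comul) :
    conv (f ∘ₗ π) (g ∘ₗ π) = conv f g ∘ₗ π := by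
  unfold conv
  rw [TensorProduct.map_comp, LinearMap.comp_assoc, LinearMap.comp_assoc, ← h1]
  rfl

lemma conv_antipode_id : conv (S (H := H)) LinearMap.id = convOne := by
  have := HopfAlgebra.mul_antipode_rTensor_comul (R := ℂ) (A := H)
  unfold conv convOne
  rw [← this]
  rfl

lemma conv_id_antipode : conv LinearMap.id (S (H := H)) = convOne := by
  have := HopfAlgebra.mul_antipode_lTensor_comul (R := ℂ) (A := H)
  unfold conv convOne
  rw [← this]
  rfl

/-- The multiplication map `H ⊗ H → H`. -/
def muH : H ⊗[ℂ] H →ₗ[ℂ] H := LinearMap.mul' ℂ H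

/-- `x ⊗ y ↦ S y * S x`. -/
def lamH : H ⊗[ℂ] H →ₗ[ℂ] H :=
  LinearMap.mul' ℂ H ∘ₗ TensorProduct.map S S ∘ₗ (TensorProduct.comm ℂ H H).toLinearMap

@[simp] lemma muH_tmul (x y : H) : muH (x ⊗ₜ[ℂ] y) = x * y := rfl
@[simp] lemma lamH_tmul (x y : H) : lamH (x ⊗ₜ[ℂ] y) = S y * S x := rfl

lemma comul_comp_muH :
    (Coalgebra.comul : H →ₗ[ℂ] H ⊗[ℂ] H) ∘ₗ muH =
      TensorProduct.map muH muH ∘ₗ (Coalgebra.comul : H ⊗[ℂ] H →ₗ[ℂ] _) := by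
  have h2 : TensorProduct.map (muH (H := H)) muH ∘ₗ
      (TensorProduct.tensorTensorTensorComm ℂ H H H H).toLinearMap =
      LinearMap.mul' ℂ (H ⊗[ℂ] H) := by
    apply TensorProduct.ext'
    intro u v
    induction u using TensorProduct.induction_on with
    | zero => simp
    | tmul a b =>
      induction v using TensorProduct.induction_on with
      | zero => simp
      | tmul c d => simp [Algebra.TensorProduct.tmul_mul_tmul]
      | add v w hv hw => simp_all [TensorProduct.tmul_add]
    | add u w hu hw => simp_all [TensorProduct.add_tmul]
  have : (Coalgebra.comul : H ⊗[ℂ] H →ₗ[ℂ] _) =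
      (TensorProduct.tensorTensorTensorComm ℂ H H H H).toLinearMap ∘ₗ
        TensorProduct.map Coalgebra.comul Coalgebra.comul := rfl
  rw [this, ← LinearMap.comp_assoc, h2]
  apply TensorProduct.ext'
  intro x y
  simp [muH, Bialgebra.comul_mul]

lemma counit_comp_muH :
    (Coalgebra.counit : H →ₗ[ℂ] ℂ) ∘ₗ muH = (Coalgebra.counit : H ⊗[ℂ] H →ₗ[ℂ] ℂ) := by
  apply TensorProduct.ext'
  intro x y
  have : (Coalgebra.counit : H ⊗[ℂ] H →ₗ[ℂ] ℂ) =
      LinearMap.mul' ℂ ℂ ∘ₗ TensorProduct.map Coalgebra.counit Coalgebra.counit :=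
    TensorProduct.ext' fun a b => by simp [mul_comm]
  simp [this, muH, Bialgebra.counit_mul]

lemma conv_rho_mu :
    conv ((S (H := H)) ∘ₗ muH) muH = (convOne : H ⊗[ℂ] H →ₗ[ℂ] H) := by
  have : (muH : H ⊗[ℂ] H →ₗ[ℂ] H) = LinearMap.id ∘ₗ muH := rfl
  rw [show conv ((S (H := H)) ∘ₗ muH) muH = conv ((S (H := H)) ∘ₗ muH) (LinearMap.id ∘ₗ muH) from rfl,
    conv_precomp _ _ _ comul_comp_muH, conv_antipode_id]
  unfold convOne
  rw [LinearMap.comp_assoc, counit_comp_muH]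

/-- A Sweedler representation of `comul (x ⊗ₜ y)` built from representations of `x` and `y`. -/
def tmulRepr (x y : H) {ιx ιy : Type} (rx : Coalgebra.Repr ℂ x ιx) (ry : Coalgebra.Repr ℂ y ιy) :
    Coalgebra.Repr ℂ (x ⊗ₜ[ℂ] y) (ιx × ιy) where
  index := rx.index ×ˢ ry.index
  left p := rx.left p.1 ⊗ₜ[ℂ] ry.left p.2
  right p := rx.right p.1 ⊗ₜ[ℂ] ry.right p.2
  eq := by
    have : CoalgebraStruct.comul (R := ℂ) (x ⊗ₜ[ℂ] y) =
        (TensorProduct.tensorTensorTensorComm ℂ H H H H)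
          (CoalgebraStruct.comul x ⊗ₜ[ℂ] CoalgebraStruct.comul y) := rfl
    rw [this, ← rx.eq, ← ry.eq]
    rw [TensorProduct.sum_tmul]
    simp only [TensorProduct.tmul_sum, map_sum, TensorProduct.tensorTensorTensorComm_tmul]
    rw [Finset.sum_product]

lemma conv_mu_lam :
    conv (muH (H := H)) lamH = (convOne : H ⊗[ℂ] H →ₗ[ℂ] H) := by
  apply TensorProduct.ext'
  intro x y
  set rx := Coalgebra.Repr.arbitrary ℂ x
  set ry := Coalgebra.Repr.arbitrary ℂ y
  rw [conv_repr _ _ _ (tmulRepr x y rx ry)]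
  show ∑ p ∈ rx.index ×ˢ ry.index,
      (rx.left p.1 * ry.left p.2) * (S (ry.right p.2) * S (rx.right p.1)) =
      convOne (x ⊗ₜ[ℂ] y)
  have this : ∀ p ∈ rx.index ×ˢ ry.index,
      (rx.left p.1 * ry.left p.2) * (S (ry.right p.2) * S (rx.right p.1)) =
      rx.left p.1 * (ry.left p.2 * S (ry.right p.2)) * S (rx.right p.1) :=
    fun p _ => by simp only [mul_assoc]
  rw [Finset.sum_congr rfl this, Finset.sum_product]
  have inner : ∀ i : H × H, ∑ j ∈ ry.index,
      rx.left i * (ry.left j * S (ry.right j)) * S (rx.right i)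
      = Coalgebra.counit (R := ℂ) y • (rx.left i * S (rx.right i)) := by
    intro i
    rw [← Finset.sum_mul, ← Finset.mul_sum,
      HopfAlgebra.sum_mul_antipode_eq_smul (R := ℂ) ry, mul_smul_comm, mul_one,
      smul_mul_assoc]
  rw [Finset.sum_congr rfl (fun i _ => inner i), ← Finset.smul_sum,
    HopfAlgebra.sum_mul_antipode_eq_smul (R := ℂ) rx]
  have hcounit : Coalgebra.counit (R := ℂ) (x ⊗ₜ[ℂ] y) =
      Coalgebra.counit (R := ℂ) x * Coalgebra.counit (R := ℂ) y := by
    simp [mul_comm]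
  show _ = algebraMap ℂ H (Coalgebra.counit (R := ℂ) (x ⊗ₜ[ℂ] y))
  rw [hcounit, map_mul, smul_smul]
  rw [mul_comm, Algebra.smul_def, map_mul, mul_one]

lemma antipode_anti_mul (x y : H) : S (x * y) = S y * S x := by
  have h1 : (S (H := H)) ∘ₗ muH = lamH := by
    calc (S (H := H)) ∘ₗ muH
        = conv ((S (H := H)) ∘ₗ muH) convOne := (conv_one _).symm
      _ = conv ((S (H := H)) ∘ₗ muH) (conv muH lamH) := by rw [conv_mu_lam]
      _ = conv (conv ((S (H := H)) ∘ₗ muH) muH) lamH := (conv_assoc _ _ _).symm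
      _ = conv convOne lamH := by rw [conv_rho_mu]
      _ = lamH := one_conv _
  have := congrArg (fun f : H ⊗[ℂ] H →ₗ[ℂ] H => f (x ⊗ₜ[ℂ] y)) h1
  simpa using this

end AntipodeAntiMul

/-- Denoting by `S_{H*}` the antipode of the dual Hopf algebra `H*`
(the transpose `φ ↦ φ ∘ S` of the antipode of `H`), the edge operators satisfy the
intertwining relations `S_{H*} ∘ L^h₋ = L^h₊ ∘ S_{H*}` and `S_{H*} ∘ T^a₋ = T^a₊ ∘ S_{H*}`
for all `h, a ∈ H`. -/
theorem statement4 [FiniteDimensional ℂ H] (hS : ∀ x : H, S (S x) = x) :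
    (∀ h : H, Sdual ∘ₗ Lm h = Lp h ∘ₗ Sdual) ∧
    (∀ a : H, Sdual ∘ₗ Tm a = Tp a ∘ₗ Sdual) := by
  constructor
  · intro h
    have key : ∀ (t : H ⊗[ℂ] H) (x : H),
        sandwich (TensorProduct.map S LinearMap.id ((TensorProduct.comm ℂ H H) t)) (S x) =
        S (sandwich (TensorProduct.map S LinearMap.id t) x) := by
      intro t
      induction t using TensorProduct.induction_on with
      | zero => intro x; simp
      | tmul u v =>
        intro x
        show S v * S x * u = S (S u * x * v)
        rw [antipode_anti_mul, antipode_anti_mul, hS, mul_assoc]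
      | add u v hu hv =>
        intro x
        simp only [map_add, LinearMap.add_apply, hu, hv]
    ext φ x
    simp only [Lm, Lp, Sdual, LinearMap.comp_apply, LinearMap.dualMap_apply]
    rw [key]
  · intro a
    ext φ x
    simp only [Tm, Tp, Sdual, LinearMap.comp_apply, LinearMap.dualMap_apply,
      LinearMap.mulRight_apply, LinearMap.mulLeft_apply]
    rw [antipode_anti_mul, hS]

end SemidualKitaev
end
end

section
/- The composite edge operators M^{(a,h)}₋ := T^a₋ ∘ L^h₋ also define a left action of the mirror bicrossproduct M(H) on H*: M^{(1,1)}₋ = id and, for all a, b, h, g ∈ H, M^{(a,h)}₋ ∘ M^{(b,g)}₋ = M^{(a(h₍₁₎ b S(h₍₂₎)), h₍₃₎ g)}₋ (sum over Sweedler components), with respect to the product (a⊗h)·(b⊗g) = a(h₍₁₎ b S(h₍₂₎)) ⊗ h₍₃₎g of M(H). -/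
/-!
Common setup for formalizing "Ribbon operators in the semidual lattice code model"
(Soglohu–Osei–Osumanu).

`H` is a Hopf algebra over `ℂ`.  Its dual Hopf algebra `H*` is realised as
`Module.Dual ℂ H`, with evaluation pairing `⟨h, φ⟩ = φ h`.  The multiplication of
`H*` is dual to the comultiplication of `H` and the comultiplication of `H*` is
dual to the multiplication of `H`; consequently every edge operator below, given
in the paper by a Sweedler formula on `H*`, is pre-composition
(`LinearMap.dualMap`) with an explicit linear endomorphism of `H`.  For instance
`L^h₊(φ) = ⟨h, S(φ₍₁₎) φ₍₃₎⟩ φ₍₂₎` is exactly `(L^h₊ φ)(x) = Σ φ (S h₍₁₎ * x * h₍₂₎)`.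
Since the antipode is assumed involutive (`S⁻¹ = S`), occurrences of `S⁻¹` are
rendered as `S`.
-/

open TensorProduct

noncomputable section

namespace SemidualKitaev

variable {H : Type} [Ring H] [HopfAlgebra ℂ H]

/-! ### Auxiliary machinery for Statement 8 -/

section Statement8Aux

lemma antipode_one' : S (1 : H) = 1 := by
  have := HopfAlgebra.mul_antipode_rTensor_comul_apply (R := ℂ) (A := H) 1
  simpa [Algebra.TensorProduct.one_def] using this

lemma counit_smul_right (x : H) {ι : Type*} (r : Coalgebra.Repr ℂ x ι) :
    ∑ i ∈ r.index, ε (r.left i) • r.right i = x := by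
  have h := Coalgebra.sum_counit_tmul_eq r
  have h2 := congrArg (TensorProduct.lid ℂ H) h
  simp only [map_sum, lid_tmul] at h2
  simpa using h2

lemma counit_smul_left (x : H) {ι : Type*} (r : Coalgebra.Repr ℂ x ι) :
    ∑ i ∈ r.index, ε (r.right i) • r.left i = x := by
  have h := Coalgebra.sum_tmul_counit_eq r
  have h2 := congrArg (TensorProduct.rid ℂ H) h
  simp only [map_sum, rid_tmul] at h2
  simpa using h2

/-- The representation of `Δ (x * y)` obtained from representations of `Δ x` and `Δ y`. -/
def mulRepr {x y : H} {ι κ : Type*} (rx : Coalgebra.Repr ℂ x ι) (ry : Coalgebra.Repr ℂ y κ) :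
    Coalgebra.Repr ℂ (x * y) (ι × κ) where
  index := rx.index ×ˢ ry.index
  left := fun p => rx.left p.1 * ry.left p.2
  right := fun p => rx.right p.1 * ry.right p.2
  eq := by
    have : Coalgebra.comul (R := ℂ) (x * y)
        = Coalgebra.comul (R := ℂ) x * Coalgebra.comul (R := ℂ) y := Bialgebra.comul_mul x y
    rw [this, ← rx.eq, ← ry.eq, Finset.sum_mul_sum]
    rw [Finset.sum_product]
    simp [Algebra.TensorProduct.tmul_mul_tmul]

lemma sum_antipode_mul_two {x y : H} {ι κ : Type*} (rx : Coalgebra.Repr ℂ x ι)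
    (ry : Coalgebra.Repr ℂ y κ) :
    ∑ i ∈ rx.index, ∑ j ∈ ry.index,
      S (rx.left i * ry.left j) * (rx.right i * ry.right j) = (ε x * ε y) • (1 : H) := by
  have h := HopfAlgebra.sum_antipode_mul_eq_smul (R := ℂ) (mulRepr rx ry)
  simp only [mulRepr] at h
  rw [Finset.sum_product] at h
  simpa using h

lemma coassoc_sum_apply {M : Type} [AddCommGroup M] [Module ℂ M]
    (f : H ⊗[ℂ] (H ⊗[ℂ] H) →ₗ[ℂ] M) {x : H} {ι : Type*} {κ Λ : ι → Type*}
    (r : Coalgebra.Repr ℂ x ι)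
    (rl : ∀ i : ι, Coalgebra.Repr ℂ (r.left i) (κ i))
    (rr : ∀ i : ι, Coalgebra.Repr ℂ (r.right i) (Λ i)) :
    ∑ i ∈ r.index, ∑ k ∈ (rr i).index,
        f (r.left i ⊗ₜ[ℂ] ((rr i).left k ⊗ₜ[ℂ] (rr i).right k))
      = ∑ i ∈ r.index, ∑ k ∈ (rl i).index,
        f ((rl i).left k ⊗ₜ[ℂ] ((rl i).right k ⊗ₜ[ℂ] r.right i)) := by
  have h := Coalgebra.sum_tmul_tmul_eq r rl rr
  have h2 := congrArg f h
  simp only [map_sum] at h2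
  exact h2.symm

lemma sum_swap4 {M : Type} [AddCommMonoid M] {ι₁ ι₂ : Type*} {ι₃ : ι₁ → Type*} {ι₄ : ι₂ → Type*}
    (s : Finset ι₁) (t : Finset ι₂) (u : ∀ i, Finset (ι₃ i)) (v : ∀ j, Finset (ι₄ j))
    (F : ∀ (i : ι₁) (j : ι₂), ι₃ i → ι₄ j → M) :
    ∑ i ∈ s, ∑ j ∈ t, ∑ k ∈ u i, ∑ l ∈ v j, F i j k l
      = ∑ j ∈ t, ∑ l ∈ v j, ∑ i ∈ s, ∑ k ∈ u i, F i j k l := by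
  rw [Finset.sum_comm]
  refine Finset.sum_congr rfl fun j _ => ?_
  calc ∑ i ∈ s, ∑ k ∈ u i, ∑ l ∈ v j, F i j k l
      = ∑ i ∈ s, ∑ l ∈ v j, ∑ k ∈ u i, F i j k l :=
        Finset.sum_congr rfl fun i _ => Finset.sum_comm
    _ = ∑ l ∈ v j, ∑ i ∈ s, ∑ k ∈ u i, F i j k l := Finset.sum_comm

lemma sum_swap4' {M : Type} [AddCommMonoid M] {ι₁ ι₂ : Type*} {ι₃ : ι₁ → Type*} {ι₄ : ι₂ → Type*}
    (s : Finset ι₁) (t : Finset ι₂) (u : ∀ i, Finset (ι₃ i)) (v : ∀ j, Finset (ι₄ j))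
    (F : ∀ (i : ι₁) (j : ι₂), ι₃ i → ι₄ j → M) :
    ∑ j ∈ t, ∑ l ∈ v j, ∑ i ∈ s, ∑ k ∈ u i, F i j k l
      = ∑ i ∈ s, ∑ k ∈ u i, ∑ j ∈ t, ∑ l ∈ v j, F i j k l := by
  rw [Finset.sum_congr rfl (fun j (_ : j ∈ t) => (Finset.sum_comm :
    ∑ l ∈ v j, ∑ i ∈ s, (∑ k ∈ u i, F i j k l) = _))]
  exact sum_swap4 t s v u (fun j i l k => F i j k l)

/-- Triple multiplication `x ⊗ (y ⊗ z) ↦ x * (y * z)`. -/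
def mul3 : H ⊗[ℂ] (H ⊗[ℂ] H) →ₗ[ℂ] H :=
  LinearMap.mul' ℂ H ∘ₗ LinearMap.lTensor H (LinearMap.mul' ℂ H)

@[simp] lemma mul3_tmul (x y z : H) : mul3 (x ⊗ₜ[ℂ] (y ⊗ₜ[ℂ] z)) = x * (y * z) := by
  simp [mul3]

/-- The antipode is anti-multiplicative. -/
lemma antipode_mul (a b : H) : S (a * b) = S b * S a := by
  classical
  let ra := Coalgebra.Repr.arbitrary ℂ a
  let rb := Coalgebra.Repr.arbitrary ℂ b
  let ral : ∀ i : H × H, Coalgebra.Repr ℂ (ra.left i) (H × H) := fun i => Coalgebra.Repr.arbitrary ℂ _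
  let rar : ∀ i : H × H, Coalgebra.Repr ℂ (ra.right i) (H × H) := fun i => Coalgebra.Repr.arbitrary ℂ _
  let rbl : ∀ j : H × H, Coalgebra.Repr ℂ (rb.left j) (H × H) := fun j => Coalgebra.Repr.arbitrary ℂ _
  let rbr : ∀ j : H × H, Coalgebra.Repr ℂ (rb.right j) (H × H) := fun j => Coalgebra.Repr.arbitrary ℂ _
  have claim1 : S (a * b) =
      ∑ i ∈ ra.index, ∑ j ∈ rb.index, ∑ k ∈ (rar i).index, ∑ l ∈ (rbr j).index,
        S (ra.left i * rb.left j) *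
          ((rar i).left k * ((rbr j).left l *
            (S ((rbr j).right l) * S ((rar i).right k)))) := by
    have step : ∀ i ∈ ra.index, ∀ j ∈ rb.index,
        (∑ k ∈ (rar i).index, ∑ l ∈ (rbr j).index,
          S (ra.left i * rb.left j) *
            ((rar i).left k * ((rbr j).left l *
              (S ((rbr j).right l) * S ((rar i).right k)))))
        = (ε (ra.right i) * ε (rb.right j)) • S (ra.left i * rb.left j) := by
      intro i _ j _
      have hb1 := HopfAlgebra.sum_mul_antipode_eq_smul (R := ℂ) (rbr j)
      have ha1 := HopfAlgebra.sum_mul_antipode_eq_smul (R := ℂ) (rar i)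
      have inner : ∀ k ∈ (rar i).index,
          (∑ l ∈ (rbr j).index,
            S (ra.left i * rb.left j) *
              ((rar i).left k * ((rbr j).left l *
                (S ((rbr j).right l) * S ((rar i).right k)))))
          = ε (rb.right j) • (S (ra.left i * rb.left j) *
              ((rar i).left k * S ((rar i).right k))) := by
        intro k _
        have e : (∑ l ∈ (rbr j).index,
            S (ra.left i * rb.left j) *
              ((rar i).left k * ((rbr j).left l *
                (S ((rbr j).right l) * S ((rar i).right k)))))
            = S (ra.left i * rb.left j) *
              ((rar i).left k *
                ((∑ l ∈ (rbr j).index, (rbr j).left l * S ((rbr j).right l)) *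
                  S ((rar i).right k))) := by
          rw [Finset.sum_mul, Finset.mul_sum, Finset.mul_sum]
          simp_rw [mul_assoc]
        rw [e, hb1, smul_mul_assoc, one_mul, mul_smul_comm, mul_smul_comm]
      rw [Finset.sum_congr rfl inner, ← Finset.smul_sum, ← Finset.mul_sum, ha1,
        mul_smul_comm, mul_one, smul_smul, mul_comm (ε (rb.right j))]
    rw [Finset.sum_congr rfl (fun i hi => Finset.sum_congr rfl (fun j hj => step i hi j hj))]
    have ha := counit_smul_left a ra
    have hb := counit_smul_left b rb
    calc S (a * b)
        = S ((∑ i ∈ ra.index, ε (ra.right i) • ra.left i)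
            * (∑ j ∈ rb.index, ε (rb.right j) • rb.left j)) := by rw [ha, hb]
      _ = ∑ i ∈ ra.index, ∑ j ∈ rb.index,
            (ε (ra.right i) * ε (rb.right j)) • S (ra.left i * rb.left j) := by
          rw [Finset.sum_mul_sum, map_sum]
          refine Finset.sum_congr rfl fun i _ => ?_
          rw [map_sum]
          refine Finset.sum_congr rfl fun j _ => ?_
          rw [smul_mul_assoc, mul_smul_comm, map_smul, map_smul, smul_smul]
  rw [claim1, sum_swap4]
  have stepA : ∀ j ∈ rb.index, ∀ l ∈ (rbr j).index,
      (∑ i ∈ ra.index, ∑ k ∈ (rar i).index,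
        S (ra.left i * rb.left j) *
          ((rar i).left k * ((rbr j).left l *
            (S ((rbr j).right l) * S ((rar i).right k)))))
      = ∑ i ∈ ra.index, ∑ k ∈ (ral i).index,
        S ((ral i).left k * rb.left j) *
          ((ral i).right k * ((rbr j).left l *
            (S ((rbr j).right l) * S (ra.right i)))) := by
    intro j _ l _
    have h := coassoc_sum_apply
      (mul3 ∘ₗ TensorProduct.map (S ∘ₗ LinearMap.mulRight ℂ (rb.left j))
        (TensorProduct.map LinearMap.id
          (LinearMap.mulLeft ℂ ((rbr j).left l) ∘ₗ
            LinearMap.mulLeft ℂ (S ((rbr j).right l)) ∘ₗ S)))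
      ra ral rar
    simpa using h
  rw [Finset.sum_congr rfl (fun j hj => Finset.sum_congr rfl
    (fun l hl => stepA j hj l hl)), sum_swap4']
  have stepB : ∀ i ∈ ra.index, ∀ k ∈ (ral i).index,
      (∑ j ∈ rb.index, ∑ l ∈ (rbr j).index,
        S ((ral i).left k * rb.left j) *
          ((ral i).right k * ((rbr j).left l *
            (S ((rbr j).right l) * S (ra.right i)))))
      = ∑ j ∈ rb.index, ∑ l ∈ (rbl j).index,
        S ((ral i).left k * (rbl j).left l) *
          ((ral i).right k * ((rbl j).right l *
            (S (rb.right j) * S (ra.right i)))) := by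
    intro i _ k _
    have h := coassoc_sum_apply
      (LinearMap.mul' ℂ H ∘ₗ TensorProduct.map (S ∘ₗ LinearMap.mulLeft ℂ ((ral i).left k))
        (LinearMap.mulLeft ℂ ((ral i).right k) ∘ₗ LinearMap.mul' ℂ H ∘ₗ
          TensorProduct.map LinearMap.id
            (LinearMap.mulRight ℂ (S (ra.right i)) ∘ₗ S)))
      rb rbl rbr
    simpa using h
  rw [Finset.sum_congr rfl (fun i hi => Finset.sum_congr rfl (fun k hk => stepB i hi k hk))]
  have stepC : ∀ i ∈ ra.index,
      (∑ k ∈ (ral i).index, ∑ j ∈ rb.index, ∑ l ∈ (rbl j).index,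
        S ((ral i).left k * (rbl j).left l) *
          ((ral i).right k * ((rbl j).right l *
            (S (rb.right j) * S (ra.right i)))))
      = ∑ j ∈ rb.index,
          (ε (ra.left i) * ε (rb.left j)) • (S (rb.right j) * S (ra.right i)) := by
    intro i _
    rw [Finset.sum_comm]
    refine Finset.sum_congr rfl fun j _ => ?_
    have e : (∑ k ∈ (ral i).index, ∑ l ∈ (rbl j).index,
        S ((ral i).left k * (rbl j).left l) *
          ((ral i).right k * ((rbl j).right l *
            (S (rb.right j) * S (ra.right i)))))
        = (∑ k ∈ (ral i).index, ∑ l ∈ (rbl j).index,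
            S ((ral i).left k * (rbl j).left l) *
              ((ral i).right k * (rbl j).right l)) *
          (S (rb.right j) * S (ra.right i)) := by
      rw [Finset.sum_mul]
      refine Finset.sum_congr rfl fun k _ => ?_
      rw [Finset.sum_mul]
      refine Finset.sum_congr rfl fun l _ => ?_
      simp_rw [mul_assoc]
    rw [e, sum_antipode_mul_two (ral i) (rbl j), smul_mul_assoc, one_mul]
  rw [Finset.sum_congr rfl (fun i hi => stepC i hi)]
  have hsb : S b = ∑ j ∈ rb.index, ε (rb.left j) • S (rb.right j) := by
    conv_lhs => rw [← counit_smul_right b rb]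
    rw [map_sum]
    exact Finset.sum_congr rfl fun j _ => by rw [map_smul]
  have hsa : S a = ∑ i ∈ ra.index, ε (ra.left i) • S (ra.right i) := by
    conv_lhs => rw [← counit_smul_right a ra]
    rw [map_sum]
    exact Finset.sum_congr rfl fun i _ => by rw [map_smul]
  rw [hsb, hsa, Finset.sum_mul_sum]
  conv_lhs => rw [Finset.sum_comm]
  refine Finset.sum_congr rfl fun j _ => Finset.sum_congr rfl fun i _ => ?_
  simp [smul_smul, smul_mul_assoc, mul_smul_comm, mul_comm]

end Statement8Aux

section Statement8Ops

/-- Curried form of the sandwiching map underlying `L⁻`/`M⁻`: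
`Sw (p ⊗ q) x = S q * x * p`. -/
def Sw : H ⊗[ℂ] H →ₗ[ℂ] H →ₗ[ℂ] H :=
  sandwich ∘ₗ (TensorProduct.map S LinearMap.id) ∘ₗ (TensorProduct.comm ℂ H H).toLinearMap

@[simp] lemma Sw_tmul (p q x : H) : Sw (p ⊗ₜ[ℂ] q) x = S q * x * p := rfl

lemma Mm_eq_dualMap (a h : H) :
    Mm a h = (Sw (Δ h) ∘ₗ LinearMap.mulRight ℂ a).dualMap := rfl

/-- `Sw` is an anti-homomorphism for the product of `H ⊗ H`. -/
lemma Sw_mul (t s : H ⊗[ℂ] H) : Sw (t * s) = Sw s ∘ₗ Sw t := by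
  induction t using TensorProduct.induction_on with
  | zero => simp [LinearMap.comp_zero]
  | add t₁ t₂ h₁ h₂ => rw [add_mul, map_add, h₁, h₂, map_add, LinearMap.comp_add]
  | tmul p q =>
    induction s using TensorProduct.induction_on with
    | zero => simp [LinearMap.zero_comp]
    | add s₁ s₂ h₁ h₂ => rw [mul_add, map_add, h₁, h₂, map_add, LinearMap.add_comp]
    | tmul p' q' =>
      ext x
      simp [Algebra.TensorProduct.tmul_mul_tmul, antipode_mul, mul_assoc]

lemma mulRight_add' (a a' : H) :
    LinearMap.mulRight ℂ (a + a') = LinearMap.mulRight ℂ a + LinearMap.mulRight ℂ a' :=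
  LinearMap.ext fun x => mul_add x a a'

lemma mulRight_smul' (c : ℂ) (a : H) :
    LinearMap.mulRight ℂ (c • a) = c • LinearMap.mulRight ℂ a :=
  LinearMap.ext fun x => mul_smul_comm c x a

/-- `Ecurry (c ⊗ t) = Sw t ∘ₗ (· * c)`. -/
def Ecurry : H ⊗[ℂ] (H ⊗[ℂ] H) →ₗ[ℂ] (H →ₗ[ℂ] H) :=
  TensorProduct.lift <| LinearMap.mk₂ ℂ
    (fun (c : H) (t : H ⊗[ℂ] H) => Sw t ∘ₗ LinearMap.mulRight ℂ c)
    (fun c c' t => by (try dsimp only); rw [mulRight_add', LinearMap.comp_add])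
    (fun r c t => by (try dsimp only); rw [mulRight_smul', LinearMap.comp_smul])
    (fun c t t' => by (try dsimp only); rw [map_add, LinearMap.add_comp])
    (fun r c t => by (try dsimp only); rw [map_smul, LinearMap.smul_comp])

@[simp] lemma Ecurry_tmul (c : H) (t : H ⊗[ℂ] H) :
    Ecurry (c ⊗ₜ[ℂ] t) = Sw t ∘ₗ LinearMap.mulRight ℂ c := rfl

/-- `u ⊗ v ↦ a * (u * b * S v)`. -/
def Amap (a b : H) : H ⊗[ℂ] H →ₗ[ℂ] H :=
  LinearMap.mulLeft ℂ a ∘ₗ LinearMap.mul' ℂ H ∘ₗ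
    TensorProduct.map (LinearMap.mulRight ℂ b) S

@[simp] lemma Amap_tmul (a b u v : H) : Amap a b (u ⊗ₜ[ℂ] v) = a * (u * b * S v) := by
  simp [Amap]

/-- `P (u ⊗ (v ⊗ t)) = Sw t ∘ₗ (· * (a * (u * b * S v)))`. -/
def Pmap (a b : H) : H ⊗[ℂ] (H ⊗[ℂ] (H ⊗[ℂ] H)) →ₗ[ℂ] (H →ₗ[ℂ] H) :=
  Ecurry ∘ₗ TensorProduct.map (Amap a b) LinearMap.id ∘ₗ
    (TensorProduct.assoc ℂ H H (H ⊗[ℂ] H)).symm.toLinearMap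

set_option synthInstance.maxHeartbeats 400000 in
lemma Pmap_tmul (a b u v : H) (t : H ⊗[ℂ] H) :
    Pmap a b (u ⊗ₜ[ℂ] (v ⊗ₜ[ℂ] t))
      = Sw t ∘ₗ LinearMap.mulRight ℂ (a * (u * b * S v)) := by
  induction t using TensorProduct.induction_on with
  | zero => rw [tmul_zero, tmul_zero, map_zero, map_zero, LinearMap.zero_comp]
  | add t₁ t₂ h₁ h₂ =>
    rw [tmul_add, tmul_add, map_add, h₁, h₂, map_add, LinearMap.add_comp]
  | tmul p q => simp [Pmap]

/-- `Q (u ⊗ t) = Sw t ∘ₗ (· * (a * (u * b)))`. -/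
def Qmap (a b : H) : H ⊗[ℂ] (H ⊗[ℂ] H) →ₗ[ℂ] (H →ₗ[ℂ] H) :=
  Ecurry ∘ₗ TensorProduct.map (LinearMap.mulLeft ℂ a ∘ₗ LinearMap.mulRight ℂ b) LinearMap.id

/-- the contraction `v ⊗ (p ⊗ q) ↦ (S v * p) ⊗ q`. -/
def Cp : H ⊗[ℂ] (H ⊗[ℂ] H) →ₗ[ℂ] H ⊗[ℂ] H :=
  LinearMap.rTensor H (LinearMap.mul' ℂ H ∘ₗ LinearMap.rTensor H S) ∘ₗ
    (TensorProduct.assoc ℂ H H H).symm.toLinearMap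

@[simp] lemma Cp_tmul (v p q : H) : Cp (v ⊗ₜ[ℂ] (p ⊗ₜ[ℂ] q)) = (S v * p) ⊗ₜ[ℂ] q := by
  simp [Cp]

/-- `Rm t = (· * b) ∘ Sw t ∘ (· * a)`. -/
def Rm (a b : H) : H ⊗[ℂ] H →ₗ[ℂ] (H →ₗ[ℂ] H) :=
  (LinearMap.llcomp ℂ H H H (LinearMap.mulRight ℂ b)) ∘ₗ
    ((LinearMap.llcomp ℂ H H H).flip (LinearMap.mulRight ℂ a)) ∘ₗ Sw

lemma Rm_apply (a b : H) (t : H ⊗[ℂ] H) :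
    Rm a b t = LinearMap.mulRight ℂ b ∘ₗ Sw t ∘ₗ LinearMap.mulRight ℂ a := rfl

set_option synthInstance.maxHeartbeats 400000 in
lemma P_factor (a b : H) : Pmap a b = Qmap a b ∘ₗ LinearMap.lTensor H Cp := by
  apply TensorProduct.ext'
  intro u y
  induction y using TensorProduct.induction_on with
  | zero => rw [tmul_zero, map_zero, map_zero]
  | add y₁ y₂ h₁ h₂ => rw [tmul_add, map_add, map_add, h₁, h₂]
  | tmul v z =>
    induction z using TensorProduct.induction_on with
    | zero => rw [tmul_zero, tmul_zero, map_zero, map_zero]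
    | add z₁ z₂ h₁ h₂ =>
      rw [tmul_add, tmul_add, map_add, map_add, h₁, h₂]
    | tmul p q =>
      rw [Pmap_tmul]
      ext x
      simp [Qmap, mul_assoc]

lemma hopf_core : Cp ∘ₗ (Δ2 : H →ₗ[ℂ] _) = TensorProduct.mk ℂ H H 1 := by
  apply LinearMap.ext
  intro h
  have e1 : (TensorProduct.assoc ℂ H H H).symm (Δ2 h)
      = LinearMap.rTensor H Δ (Δ h) := Coalgebra.coassoc_symm_apply h
  have e2 : Cp (Δ2 h) = LinearMap.rTensor H
      ((LinearMap.mul' ℂ H ∘ₗ LinearMap.rTensor H S) ∘ₗ Δ) (Δ h) := by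
    simp only [Cp, LinearMap.comp_apply, LinearEquiv.coe_coe]
    rw [e1, ← LinearMap.rTensor_comp_apply]
  rw [LinearMap.comp_apply, e2, LinearMap.comp_assoc, HopfAlgebra.mul_antipode_rTensor_comul,
    LinearMap.rTensor_comp, LinearMap.comp_apply, Coalgebra.rTensor_counit_comul]
  simp

lemma Q_factor (a b : H) :
    Qmap a b ∘ₗ LinearMap.lTensor H (TensorProduct.mk ℂ H H 1) = Rm a b := by
  apply TensorProduct.ext'
  intro u w
  rw [LinearMap.comp_apply, LinearMap.lTensor_tmul]
  ext x
  simp [Qmap, Rm_apply, mul_assoc]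

lemma main_chain (a b h : H) : Pmap a b (Δ3 h) = Rm a b (Δ h) := by
  have e1 : Pmap a b (Δ3 h)
      = Qmap a b (LinearMap.lTensor H (Cp ∘ₗ (Δ2 : H →ₗ[ℂ] _)) (Δ h)) := by
    rw [P_factor]
    have e0 : Δ3 h = LinearMap.lTensor H (Δ2 : H →ₗ[ℂ] _) (Δ h) := rfl
    rw [LinearMap.comp_apply, e0, ← LinearMap.lTensor_comp_apply]
  rw [e1, hopf_core, ← LinearMap.comp_apply, Q_factor]

lemma dualMap_sum {ι : Type} (s : Finset ι) (f : ι → (H →ₗ[ℂ] H)) :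
    (∑ i ∈ s, f i).dualMap = ∑ i ∈ s, (f i).dualMap := by
  ext φ x
  simp [LinearMap.dualMap_apply, LinearMap.sum_apply]

lemma statement8_one : Mm (1 : H) (1 : H) = LinearMap.id := by
  have h1 : (Sw (Δ (1 : H)) ∘ₗ LinearMap.mulRight ℂ (1 : H)) = LinearMap.id := by
    have hΔ : Δ (1 : H) = (1 : H) ⊗ₜ[ℂ] (1 : H) := by
      rw [Bialgebra.comul_one, Algebra.TensorProduct.one_def]
    ext x
    simp [hΔ, antipode_one']
  rw [Mm_eq_dualMap, h1, LinearMap.dualMap_id]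

lemma statement8_mul (a b h g : H) (ι : Type) (s : Finset ι) (h1 h2 h3 : ι → H)
    (hrep : (∑ i ∈ s, h1 i ⊗ₜ[ℂ] (h2 i ⊗ₜ[ℂ] h3 i)) = Δ2 h) :
    Mm a h ∘ₗ Mm b g = ∑ i ∈ s, Mm (a * (h1 i * b * S (h2 i))) (h3 i * g) := by
  have hΔ3 : Δ3 h = ∑ i ∈ s, h1 i ⊗ₜ[ℂ] (h2 i ⊗ₜ[ℂ] Δ (h3 i)) := by
    have e0 : Δ3 h = LinearMap.lTensor H (LinearMap.lTensor H Δ) (Δ2 h) := by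
      show (LinearMap.lTensor H (Δ2 : H →ₗ[ℂ] _) ∘ₗ Δ) h = _
      rw [show (Δ2 : H →ₗ[ℂ] _) = LinearMap.lTensor H Δ ∘ₗ Δ from rfl,
        LinearMap.lTensor_comp]
      rfl
    rw [e0, ← hrep, map_sum]
    exact Finset.sum_congr rfl fun i _ => by
      rw [LinearMap.lTensor_tmul, LinearMap.lTensor_tmul]
  have key : (Sw (Δ g) ∘ₗ LinearMap.mulRight ℂ b) ∘ₗ (Sw (Δ h) ∘ₗ LinearMap.mulRight ℂ a)
      = ∑ i ∈ s, (Sw (Δ (h3 i * g)) ∘ₗ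
          LinearMap.mulRight ℂ (a * (h1 i * b * S (h2 i)))) := by
    calc (Sw (Δ g) ∘ₗ LinearMap.mulRight ℂ b) ∘ₗ (Sw (Δ h) ∘ₗ LinearMap.mulRight ℂ a)
        = LinearMap.llcomp ℂ H H H (Sw (Δ g)) (Rm a b (Δ h)) := rfl
      _ = LinearMap.llcomp ℂ H H H (Sw (Δ g)) (Pmap a b (Δ3 h)) := by rw [main_chain]
      _ = ∑ i ∈ s, LinearMap.llcomp ℂ H H H (Sw (Δ g))
            (Pmap a b (h1 i ⊗ₜ[ℂ] (h2 i ⊗ₜ[ℂ] Δ (h3 i)))) := by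
          rw [hΔ3, map_sum, map_sum]
      _ = ∑ i ∈ s, (Sw (Δ (h3 i * g)) ∘ₗ
            LinearMap.mulRight ℂ (a * (h1 i * b * S (h2 i)))) := by
          refine Finset.sum_congr rfl fun i _ => ?_
          rw [Pmap_tmul]
          have e : Δ (h3 i * g) = Δ (h3 i) * Δ g := Bialgebra.comul_mul _ _
          rw [e, Sw_mul]
          rfl
  calc Mm a h ∘ₗ Mm b g
      = ((Sw (Δ g) ∘ₗ LinearMap.mulRight ℂ b) ∘ₗ
          (Sw (Δ h) ∘ₗ LinearMap.mulRight ℂ a)).dualMap := rfl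
    _ = (∑ i ∈ s, (Sw (Δ (h3 i * g)) ∘ₗ
          LinearMap.mulRight ℂ (a * (h1 i * b * S (h2 i))))).dualMap := by rw [key]
    _ = ∑ i ∈ s, Mm (a * (h1 i * b * S (h2 i))) (h3 i * g) := by
        rw [dualMap_sum]
        exact Finset.sum_congr rfl fun i _ => (Mm_eq_dualMap _ _).symm

end Statement8Ops

/-- The composite edge operators `M^{(a,h)}₋ = T^a₋ ∘ L^h₋` also define
a left action of the mirror bicrossproduct `M(H)` on `H*`: `M^{(1,1)}₋ = id` and, for all
`a, b, h, g ∈ H` and every Sweedler representation `Δ² h = Σ h₁ ⊗ h₂ ⊗ h₃`,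
`M^{(a,h)}₋ ∘ M^{(b,g)}₋ = Σ M^{(a (h₁ b S(h₂)), h₃ g)}₋`. -/
theorem statement8 [FiniteDimensional ℂ H] (hS : ∀ x : H, S (S x) = x) :
    Mm (1 : H) (1 : H) = LinearMap.id ∧
    ∀ (a b h g : H) (ι : Type) (s : Finset ι) (h1 h2 h3 : ι → H),
      (∑ i ∈ s, h1 i ⊗ₜ[ℂ] (h2 i ⊗ₜ[ℂ] h3 i)) = Δ2 h →
      Mm a h ∘ₗ Mm b g = ∑ i ∈ s, Mm (a * (h1 i * b * S (h2 i))) (h3 i * g) := by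
  exact ⟨statement8_one, fun a b h g ι s h1 h2 h3 hrep =>
    statement8_mul a b h g ι s h1 h2 h3 hrep⟩

end SemidualKitaev
end
end
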